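/- arXiv:2502.18709 — 2 statements merged into one kernel-verified Lean document; each statement's English description precedes it below -/
import Mathlib

section
/- Let A and B be positive semidefinite matrices on ℝ^d with the same column space (image) and A ⪰ B (i.e., A − B is positive semidefinite). Then the Moore–Penrose pseudo-inverses satisfy A⁺ ⪯ B⁺. -/
open Matrix

def IsMoorePenroseInv {n : Type*} [Fintype n] (A X : Matrix n n ℝ) : Prop :=
  A * X * A = A ∧ X * A * X = X ∧ (A * X)ᵀ = A * X ∧ (X * A)ᵀ = X * A

/-!
Since `A ⪰ B ⪰ 0`, Cauchy–Schwarz for the semi-inner product of `B` gives `B A⁺ B ⪯ B`: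
with `v = A⁺ B x` and `q = xᵀ B A⁺ B x = vᵀ A v = vᵀ B x` one has
`q² ≤ (vᵀ B v)(xᵀ B x) ≤ q · xᵀ B x`. Conjugating by `B⁺` gives `B⁺ - B⁺ B A⁺ B B⁺ ⪰ 0`, and
`B⁺ B = B B⁺` is the orthogonal projection onto `image B = image A`, which fixes `A⁺` on both sides.
-/

namespace Matrix

theorem mul_mul_eq_of_range_le {R m n k : Type*} [CommRing R] [Fintype m] [Fintype n] [Fintype k]
    {A : Matrix m k R} {B : Matrix m n R} {Y : Matrix n m R} (hBYB : B * Y * B = B)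
    (hAB : LinearMap.range A.mulVecLin ≤ LinearMap.range B.mulVecLin) : B * Y * A = A := by
  classical
  refine ext_of_mulVec_single fun j => ?_
  obtain ⟨w, hw⟩ := hAB ⟨Pi.single j 1, rfl⟩
  change B *ᵥ w = A *ᵥ Pi.single j 1 at hw
  rw [← mulVec_mulVec, ← hw, mulVec_mulVec, hBYB]

theorem PosSemidef.dotProduct_mulVec_sq_le {n : Type*} [Fintype n] {M : Matrix n n ℝ}
    (hM : M.PosSemidef) (x y : n → ℝ) :
    (x ⬝ᵥ M *ᵥ y) ^ 2 ≤ (x ⬝ᵥ M *ᵥ x) * (y ⬝ᵥ M *ᵥ y) := by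
  let := M.toSeminormedAddCommGroup hM
  let := M.toInnerProductSpace hM
  have h := real_inner_mul_inner_self_le x y
  change (M *ᵥ y) ⬝ᵥ star x * ((M *ᵥ y) ⬝ᵥ star x) ≤
    ((M *ᵥ x) ⬝ᵥ star x) * ((M *ᵥ y) ⬝ᵥ star y) at h
  simp only [star_trivial, dotProduct_comm (M *ᵥ _)] at h
  rwa [← sq] at h

theorem mulVec_dotProduct {R m n : Type*} [CommSemiring R] [Fintype m] [Fintype n]
    (N : Matrix m n R) (x : n → R) (z : m → R) : (N *ᵥ x) ⬝ᵥ z = x ⬝ᵥ Nᵀ *ᵥ z := by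
  rw [dotProduct_mulVec, vecMul_transpose]

theorem PosSemidef.sub_mul_mul {n : Type*} [Fintype n] {A B X : Matrix n n ℝ}
    (hB : B.PosSemidef) (hAB : (A - B).PosSemidef) (hX : X.IsSymm) (hXAX : X * A * X = X) :
    (B - B * X * B).PosSemidef := by
  have hBs : B.IsSymm := isHermitian_iff_isSymm.mp hB.isHermitian
  refine posSemidef_iff_dotProduct_mulVec.mpr ⟨isHermitian_iff_isSymm.mpr ?_, fun x => ?_⟩
  · refine hBs.sub ?_
    rw [IsSymm, transpose_mul, transpose_mul, hBs.eq, hX.eq, Matrix.mul_assoc]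
  set v := (X * B) *ᵥ x
  have hXBt : (X * B)ᵀ = B * X := by rw [transpose_mul, hBs.eq, hX.eq]
  have hvAv : v ⬝ᵥ A *ᵥ v = x ⬝ᵥ (B * X * B) *ᵥ x := by
    rw [mulVec_dotProduct, hXBt, mulVec_mulVec, mulVec_mulVec, ← Matrix.mul_assoc,
      Matrix.mul_assoc B, Matrix.mul_assoc B, hXAX]
  have hvBx : v ⬝ᵥ B *ᵥ x = x ⬝ᵥ (B * X * B) *ᵥ x := by
    rw [mulVec_dotProduct, hXBt, mulVec_mulVec]
  have hvBv : v ⬝ᵥ B *ᵥ v ≤ v ⬝ᵥ A *ᵥ v := by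
    have := hAB.dotProduct_mulVec_nonneg v
    rw [star_trivial, sub_mulVec, dotProduct_sub] at this
    linarith
  have hxBx_nonneg : 0 ≤ x ⬝ᵥ B *ᵥ x := by simpa using hB.dotProduct_mulVec_nonneg x
  have hCS := hB.dotProduct_mulVec_sq_le v x
  rw [hvBx] at hCS
  rw [hvAv] at hvBv
  rw [star_trivial, sub_mulVec, dotProduct_sub, sub_nonneg]
  nlinarith [mul_le_mul_of_nonneg_right hvBv hxBx_nonneg]

end Matrix

namespace IsMoorePenroseInv

variable {n : Type*} [Fintype n] {A B X Y : Matrix n n ℝ}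

theorem unique (hX : IsMoorePenroseInv A X) (hY : IsMoorePenroseInv A Y) : X = Y := by
  obtain ⟨hX1, hX2, hX3, hX4⟩ := hX
  obtain ⟨hY1, hY2, hY3, hY4⟩ := hY
  have hAX : A * X = A * Y :=
    calc A * X = (A * Y * A * X)ᵀ := by rw [hY1, hX3]
      _ = A * X * (A * Y) := by rw [Matrix.mul_assoc, transpose_mul, hX3, hY3]
      _ = A * Y := by rw [← Matrix.mul_assoc, hX1]
  have hXA : X * A = Y * A :=
    calc X * A = (X * A * (Y * A))ᵀ := by
          rw [← Matrix.mul_assoc, Matrix.mul_assoc X A Y, Matrix.mul_assoc X, hY1, hX4]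
      _ = Y * A * (X * A) := by rw [transpose_mul, hX4, hY4]
      _ = Y * A := by rw [Matrix.mul_assoc, ← Matrix.mul_assoc A, hX1]
  calc X = Y * A * X := by rw [← hXA, hX2]
    _ = Y := by rw [Matrix.mul_assoc, hAX, ← Matrix.mul_assoc, hY2]

theorem transpose (hX : IsMoorePenroseInv A X) : IsMoorePenroseInv Aᵀ Xᵀ := by
  obtain ⟨hX1, hX2, hX3, hX4⟩ := hX
  refine ⟨?_, ?_, ?_, ?_⟩
  · rw [← transpose_mul, ← transpose_mul, ← Matrix.mul_assoc, hX1]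
  · rw [← transpose_mul, ← transpose_mul, ← Matrix.mul_assoc, hX2]
  · rw [← transpose_mul, transpose_transpose, hX4]
  · rw [← transpose_mul, transpose_transpose, hX3]

theorem isSymm (hA : A.IsSymm) (hX : IsMoorePenroseInv A X) : X.IsSymm :=
  unique (hA.eq ▸ hX.transpose) hX

theorem mul_comm (hA : A.IsSymm) (hX : IsMoorePenroseInv A X) : A * X = X * A := by
  rw [← hX.2.2.1, transpose_mul, (hX.isSymm hA).eq, hA.eq]

theorem mul_mul_eq_of_range_le (hA : A.IsSymm) (hX : IsMoorePenroseInv A X) (hB : B.IsSymm)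
    (hY : IsMoorePenroseInv B Y)
    (hAB : LinearMap.range A.mulVecLin ≤ LinearMap.range B.mulVecLin) : Y * B * X = X := by
  have hX_eq : A * X * X = X := by rw [hX.mul_comm hA, hX.2.1]
  have hYBA : Y * B * A = A := by
    rw [← hY.mul_comm hB, Matrix.mul_mul_eq_of_range_le hY.1 hAB]
  rw [← hX_eq, ← Matrix.mul_assoc, ← Matrix.mul_assoc, hYBA]

end IsMoorePenroseInv

theorem stmt2 {d : ℕ} (A B Aplus Bplus : Matrix (Fin d) (Fin d) ℝ)
    (hA : A.PosSemidef) (hB : B.PosSemidef)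
    (himg : LinearMap.range A.mulVecLin = LinearMap.range B.mulVecLin)
    (hAB : (A - B).PosSemidef)
    (hAp : IsMoorePenroseInv A Aplus) (hBp : IsMoorePenroseInv B Bplus) :
    (Bplus - Aplus).PosSemidef := by
  have hAs : A.IsSymm := isHermitian_iff_isSymm.mp hA.isHermitian
  have hBs : B.IsSymm := isHermitian_iff_isSymm.mp hB.isHermitian
  have hAps := hAp.isSymm hAs
  have hBps := hBp.isSymm hBs
  have hleft : Bplus * B * Aplus = Aplus := hAp.mul_mul_eq_of_range_le hAs hBs hBp himg.le
  have hright : Aplus * B * Bplus = Aplus := by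
    simpa only [transpose_mul, hAps.eq, hBs.eq, hBps.eq, Matrix.mul_assoc] using
      congrArg transpose hleft
  have h := (hB.sub_mul_mul hAB hAps hAp.2.1).conjTranspose_mul_mul_same Bplus
  rwa [conjTranspose_eq_transpose_of_trivial, hBps.eq, Matrix.mul_sub, Matrix.sub_mul, hBp.2.1,
    ← Matrix.mul_assoc, ← Matrix.mul_assoc, hleft, hright] at h
end

section
/- Suppose for each t = 1,…,T the nonnegative reals S_t satisfy Σ_{t=1}^T (S_t − U_t) ≤ C·√(Σ_{t=1}^T S_t) for some C ≥ 0 and nonnegative U_t, and suppose the expected per-round loss satisfies ℓ_t ≤ (1−a)·S_t for some a ∈ (0,1). Then Σ_{t=1}^T ℓ_t − Σ_{t=1}^T U_t ≤ C²/(4a). -/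
theorem stmt13 (T : ℕ) (S U ℓ : Fin T → ℝ) (C a : ℝ)
    (hC : 0 ≤ C) (hS : ∀ t, 0 ≤ S t) (hU : ∀ t, 0 ≤ U t) (hl : ∀ t, 0 ≤ ℓ t)
    (ha : 0 < a) (ha1 : a < 1)
    (hreg : ∑ t, (S t - U t) ≤ C * Real.sqrt (∑ t, S t))
    (hloss : ∀ t, ℓ t ≤ (1 - a) * S t) :
    ∑ t, ℓ t - ∑ t, U t ≤ C ^ 2 / (4 * a) := by
  have hx : (0:ℝ) ≤ ∑ t, S t := Finset.sum_nonneg fun t _ => hS t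
  set x := ∑ t, S t with hxdef
  set r := Real.sqrt x with hrdef
  have hsq : r ^ 2 = x := Real.sq_sqrt hx
  have hlsum : ∑ t, ℓ t ≤ (1 - a) * x := by
    rw [hxdef, Finset.mul_sum]
    exact Finset.sum_le_sum fun t _ => hloss t
  have hreg' : x - ∑ t, U t ≤ C * r := by
    rw [hxdef, ← Finset.sum_sub_distrib]; exact hreg
  calc ∑ t, ℓ t - ∑ t, U t ≤ ((1 - a) * x) - ∑ t, U t := by linarith
    _ = (x - ∑ t, U t) - a * x := by ring
    _ ≤ C * r - a * x := by linarith
    _ = C * r - a * r ^ 2 := by rw [hsq]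
    _ ≤ C ^ 2 / (4 * a) := by
        rw [le_div_iff₀ (by positivity : (0:ℝ) < 4 * a)]
        nlinarith [sq_nonneg (2 * a * r - C)]
end
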